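/- arXiv:2410.24130 — 2 statements merged into one kernel-verified Lean document; each statement's English description precedes it below -/
import Mathlib

section
/- Products of stars formula: let k, r, a_1, …, a_k ∈ ℤ⁺, set G_0 = K_1 and G_i = S_{a_1}□⋯□S_{a_i}. Then m_e(G_k, r) = m_e(G_{k−1}, r) + a_k·m_e(G_{k−1}, r−1) + Σ_{t=1}^{a_k−1} t·d_{r−t} + a_k·Σ_{t=a_k}^{r} d_{r−t}, where d_i is the number of vertices of degree i in G_{k−1}. -/
open Polynomial

namespace BondPerc

open Classical

set_option maxHeartbeats 1000000

/-- The set of edges eventually infected in `r`-bond bootstrap percolation on `G`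
starting from the initially infected set `S`. -/
inductive Infected {V : Type*} (G : SimpleGraph V) (r : ℕ) (S : Set (Sym2 V)) : Sym2 V → Prop
  | init {e : Sym2 V} (he : e ∈ S) : Infected G r S e
  | step {e : Sym2 V} (he : e ∈ G.edgeSet) (v : V) (hv : v ∈ e)
      (T : Finset (Sym2 V)) (hT : r ≤ T.card)
      (hT1 : ∀ f ∈ T, f ∈ G.edgeSet) (hT2 : ∀ f ∈ T, v ∈ f)
      (hT3 : ∀ f ∈ T, Infected G r S f) : Infected G r S e

/-- `S` percolates in `r`-bond bootstrap percolation on `G`. -/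
def Percolates {V : Type*} (G : SimpleGraph V) (r : ℕ) (S : Set (Sym2 V)) : Prop :=
  S ⊆ G.edgeSet ∧ ∀ e ∈ G.edgeSet, Infected G r S e

/-- `m_e(G,r)`: the minimum size of an `r`-percolating set of edges of `G`. -/
noncomputable def me {V : Type*} (G : SimpleGraph V) (r : ℕ) : ℕ :=
  sInf {n | ∃ S : Set (Sym2 V), S.Finite ∧ Percolates G r S ∧ S.ncard = n}

/-- `c` is a proper edge-colouring of `G`: edges sharing a vertex get distinct colours. -/
def IsProperEdgeColoring {V : Type*} (G : SimpleGraph V) (c : Sym2 V → ℝ) : Prop :=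
  ∀ e ∈ G.edgeSet, ∀ f ∈ G.edgeSet, e ≠ f → (∃ v, v ∈ e ∧ v ∈ f) → c e ≠ c f

set_option maxHeartbeats 1000000 in
/-- The vector space `W^r_{G,c}` of tuples of polynomials `(p_v)` with
`deg p_v ≤ min(r, deg v) - 1` and `p_u(c(uv)) = p_v(c(uv))` for every edge `uv`. -/
noncomputable def Wspace {V : Type*} [Fintype V] (G : SimpleGraph V) (r : ℕ)
    (c : Sym2 V → ℝ) : Submodule ℝ (V → Polynomial ℝ) where
  carrier := {p | (∀ v, (p v).degree < (min r (G.degree v) : ℕ)) ∧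
    ∀ u v, G.Adj u v → (p u).eval (c s(u, v)) = (p v).eval (c s(u, v))}
  add_mem' := by
    rintro p q ⟨hp1, hp2⟩ ⟨hq1, hq2⟩
    refine ⟨fun v => lt_of_le_of_lt (degree_add_le _ _) (max_lt (hp1 v) (hq1 v)), ?_⟩
    intro u v huv
    simp only [Pi.add_apply, eval_add, hp2 u v huv, hq2 u v huv]
  zero_mem' := by
    refine ⟨fun v => ?_, fun u v h => by simp⟩
    simp only [Pi.zero_apply, degree_zero]
    exact WithBot.bot_lt_coe _
  smul_mem' := by
    rintro a p ⟨hp1, hp2⟩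
    refine ⟨fun v => lt_of_le_of_lt (degree_smul_le a (p v)) (hp1 v), ?_⟩
    intro u v huv
    simp only [Pi.smul_apply, Polynomial.eval_smul, hp2 u v huv]

/-- `dim W^r_{G,c}`. -/
noncomputable def Wdim {V : Type*} [Fintype V] (G : SimpleGraph V) (r : ℕ)
    (c : Sym2 V → ℝ) : ℕ :=
  Module.finrank ℝ (Wspace G r c)

/-- `d^G_i`, the number of vertices of `G` of degree `i` (indexed by `ℤ`, zero for `i < 0`). -/
noncomputable def dcount {V : Type*} [Fintype V] (G : SimpleGraph V) (i : ℤ) : ℕ :=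
  Nat.card {v : V // (G.degree v : ℤ) = i}

/-- The star `S_k` with centre `0` and `k` leaves. -/
def starGraph (k : ℕ) : SimpleGraph (Fin (k + 1)) :=
  SimpleGraph.fromRel fun i _ => i = 0

/-- The theta graph `H_{k,ℓ}`: two hub vertices joined by three internally disjoint
paths of lengths `1`, `ℓ - 1` and `k - 1`. -/
def thetaGraph (k l : ℕ) : SimpleGraph (Fin 2 ⊕ Fin (l - 2) ⊕ Fin (k - 2)) :=
  SimpleGraph.fromRel fun x y =>
    (x = Sum.inl 0 ∧ y = Sum.inl 1) ∨
    (x = Sum.inl 0 ∧ ∃ j : Fin (l - 2), y = Sum.inr (Sum.inl j) ∧ j.val = 0) ∨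
    (∃ i j : Fin (l - 2), x = Sum.inr (Sum.inl i) ∧ y = Sum.inr (Sum.inl j) ∧
      j.val = i.val + 1) ∨
    (∃ i : Fin (l - 2), x = Sum.inr (Sum.inl i) ∧ i.val = l - 3 ∧ y = Sum.inl 1) ∨
    (x = Sum.inl 0 ∧ ∃ j : Fin (k - 2), y = Sum.inr (Sum.inr j) ∧ j.val = 0) ∨
    (∃ i j : Fin (k - 2), x = Sum.inr (Sum.inr i) ∧ y = Sum.inr (Sum.inr j) ∧
      j.val = i.val + 1) ∨
    (∃ i : Fin (k - 2), x = Sum.inr (Sum.inr i) ∧ i.val = k - 3 ∧ y = Sum.inl 1)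


/-- The iterated Cartesian product of stars `S_{a_1} □ ⋯ □ S_{a_k}`, built from a list
(head is the last factor); the empty product is `K_1`. -/
def starProd : List ℕ → (V : Type) × SimpleGraph V
  | [] => ⟨PUnit, ⊥⟩
  | a :: l => ⟨(starProd l).1 × Fin (a + 1), (starProd l).2 □ starGraph a⟩

instance starProdFintype : (l : List ℕ) → Fintype (starProd l).1
  | [] => inferInstanceAs (Fintype PUnit)
  | a :: l => letI := starProdFintype l
      inferInstanceAs (Fintype ((starProd l).1 × Fin (a + 1)))


/-!
For a proper edge colouring `c` of `G`, the space `W^r_{G,c}` has dimension at most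
`m_e(G, r)`. If `p ∈ W` vanishes at one endpoint of each seed edge, it vanishes at both
endpoints of every infected edge: when an edge at `v` gets infected, `p_v` has at least
`r` distinct roots (the colouring is proper) but degree `< r`, so `p_v = 0`. Hence evaluation
at the seed edges is injective on `W`.

For `G □ S_a` there is a seed of size `m_e(G, r) + a m_e(G, r - 1) + ∑_u min (r - deg u, a)`:
layer `0` percolates as in `G`, every star edge is then infected from its centre once
`min (r - deg u, a)` of them are seeded, and each further layer sees one extra infected edge
per vertex, so threshold `r - 1` in `G` suffices. Conversely, giving the star edges fresh
colours, `W^r_{G □ S_a}` contains an injective linear image of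
`W^r_G × (W^{r-1}_G)^a × ∏_u ℝ[X]_{< min (r - deg u, a)}`. By induction over the factors,
products of stars have colourings with `dim W = m_e` for all `r`, so both bounds are equalities;
grouping the vertices by degree turns `∑_u min (r - deg u, a)` into the `d_i` terms.
-/

open Lagrange

section Percolation

variable {V : Type*} {G : SimpleGraph V} {r : ℕ}

theorem me_le_card {S : Finset (Sym2 V)} (hS : Percolates G r S) : me G r ≤ S.card :=
  Nat.sInf_le ⟨S, S.finite_toSet, hS, Set.ncard_coe_finset S⟩

theorem exists_percolates_card_eq_me [Finite V] (G : SimpleGraph V) (r : ℕ) :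
    ∃ S : Finset (Sym2 V), Percolates G r S ∧ S.card = me G r := by
  obtain ⟨S, hfin, hS, hcard⟩ : me G r ∈
      {n | ∃ S : Set (Sym2 V), S.Finite ∧ Percolates G r S ∧ S.ncard = n} :=
    Nat.sInf_mem ⟨_, G.edgeSet, Set.toFinite _, ⟨subset_rfl, fun _ he => .init he⟩, rfl⟩
  exact ⟨hfin.toFinset, by simpa using hS, by rw [← hcard, Set.ncard_eq_toFinset_card S hfin]⟩

theorem me_bot (r : ℕ) : me (⊥ : SimpleGraph V) r = 0 :=
  Nat.eq_zero_of_le_zero <| me_le_card (S := ∅) ⟨by simp, by simp⟩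

theorem IsProperEdgeColoring.injOn_incident {c : Sym2 V → ℝ} (hc : IsProperEdgeColoring G c)
    (v : V) : Set.InjOn c {e | e ∈ G.edgeSet ∧ v ∈ e} := fun e he f hf hef =>
  by_contra fun hne => hc e he.1 f hf.1 hne ⟨v, he.2, hf.2⟩ hef

/-- Percolation with threshold `t` in `G` is simulated in `P` with threshold `s` when every
vertex `u` has `s - t` extra infected edges `B u` at `f u`, outside the image of `G`. -/
theorem Infected.map {W : Type*} {P : SimpleGraph W} (f : G ↪g P) {s t : ℕ}
    {S : Set (Sym2 V)} {S' : Set (Sym2 W)} (B : V → Finset (Sym2 W))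
    (hB : ∀ u, ∀ e ∈ B u, e ∈ P.edgeSet ∧ f u ∈ e ∧ Infected P s S' e)
    (hB_notMem : ∀ u, ∀ e ∈ B u, e ∉ Set.range (Sym2.map f))
    (hcard : ∀ u, s ≤ t + (B u).card) (hS : ∀ e ∈ S, Infected P s S' (e.map f))
    {e : Sym2 V} (he : Infected G t S e) : Infected P s S' (e.map f) := by
  induction he with
  | init h => exact hS _ h
  | step he v hv T hT hT1 hT2 _ ih =>
    refine .step (f.toHom.map_mem_edgeSet he) (f v) (Sym2.mem_map.mpr ⟨v, hv, rfl⟩)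
      (T.image (Sym2.map f) ∪ B v) ?_ ?_ ?_ ?_
    · have hdisj : Disjoint (T.image (Sym2.map f)) (B v) := Finset.disjoint_left.mpr
        fun e he heB => by
          obtain ⟨g, -, rfl⟩ := Finset.mem_image.mp he
          exact hB_notMem v _ heB ⟨g, rfl⟩
      rw [Finset.card_union_of_disjoint hdisj,
        Finset.card_image_of_injective _ (Sym2.map.injective f.injective)]
      exact (hcard v).trans (Nat.add_le_add_right hT _)
    all_goals
      simp only [Finset.mem_union, Finset.mem_image]
      rintro _ (⟨g, hg, rfl⟩ | hgB)
    · exact f.toHom.map_mem_edgeSet (hT1 g hg)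
    · exact (hB v _ hgB).1
    · exact Sym2.mem_map.mpr ⟨v, hT2 g hg, rfl⟩
    · exact (hB v _ hgB).2.1
    · exact ih g hg
    · exact (hB v _ hgB).2.2

end Percolation

section PolynomialBound

variable {V : Type*} [Fintype V] {G : SimpleGraph V} {r : ℕ} {c : Sym2 V → ℝ}
  {p : V → ℝ[X]}

theorem eval_eq_zero_of_mem_wspace (hp : p ∈ Wspace G r c) {e : Sym2 V} (he : e ∈ G.edgeSet)
    {v : V} (hv : v ∈ e) (h0 : (p v).eval (c e) = 0) : ∀ w ∈ e, (p w).eval (c e) = 0 := by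
  induction e using Sym2.ind with
  | _ x y =>
    have hxy := hp.2 x y he
    simp only [Sym2.mem_iff] at hv ⊢
    rintro w (rfl | rfl) <;> rcases hv with rfl | rfl <;> simp_all

/-- A nonzero `p v` has fewer than `min r (deg v)` roots, and a proper colouring gives
distinct roots on distinct edges at `v`. -/
theorem eq_zero_of_eval_eq_zero_incident (hc : IsProperEdgeColoring G c)
    (hp : p ∈ Wspace G r c) {v : V} {T : Finset (Sym2 V)}
    (hT : ∀ e ∈ T, e ∈ G.edgeSet ∧ v ∈ e) (hcard : min r (G.degree v) ≤ T.card)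
    (h0 : ∀ e ∈ T, (p v).eval (c e) = 0) : p v = 0 := by
  by_contra hpv
  refine hpv <| eq_zero_of_natDegree_lt_card_of_eval_eq_zero' _ (T.image c)
    (by simpa using h0) ?_
  rw [Finset.card_image_of_injOn ((hc.injOn_incident v).mono fun e he => hT e he)]
  exact ((natDegree_lt_iff_degree_lt hpv).mpr (hp.1 v)).trans_le hcard

theorem Infected.eval_eq_zero (hc : IsProperEdgeColoring G c) (hp : p ∈ Wspace G r c)
    {S : Set (Sym2 V)} (hSG : S ⊆ G.edgeSet) (hS : ∀ e ∈ S, ∃ v ∈ e, (p v).eval (c e) = 0)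
    {e : Sym2 V} (he : Infected G r S e) : ∀ v ∈ e, (p v).eval (c e) = 0 := by
  induction he with
  | init h =>
    obtain ⟨v, hv, h0⟩ := hS _ h
    exact eval_eq_zero_of_mem_wspace hp (hSG h) hv h0
  | step he v hv T hT hT1 hT2 _ ih =>
    have hpv : p v = 0 := eq_zero_of_eval_eq_zero_incident hc hp
      (fun f hf => ⟨hT1 f hf, hT2 f hf⟩) ((min_le_left _ _).trans hT)
      fun f hf => ih f hf v (hT2 f hf)
    exact eval_eq_zero_of_mem_wspace hp he hv (by simp [hpv])

theorem eq_zero_of_percolates (hc : IsProperEdgeColoring G c) (hp : p ∈ Wspace G r c)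
    {S : Set (Sym2 V)} (hS : Percolates G r S)
    (h0 : ∀ e ∈ S, ∃ v ∈ e, (p v).eval (c e) = 0) : p = 0 := by
  funext v
  refine eq_zero_of_eval_eq_zero_incident hc hp (T := G.incidenceFinset v)
    (fun _ he => by simpa [SimpleGraph.incidenceSet] using he)
    (by simp) fun e he => ?_
  rw [SimpleGraph.mem_incidenceFinset] at he
  exact (hS.2 e he.1).eval_eq_zero hc hp hS.1 h0 v he.2

theorem wdim_le_card_of_percolates (hc : IsProperEdgeColoring G c) {S : Finset (Sym2 V)}
    (hS : Percolates G r S) : Wdim G r c ≤ S.card := by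
  let ev : Wspace G r c →ₗ[ℝ] (S → ℝ) :=
    { toFun p e := ((p : V → ℝ[X]) (e : Sym2 V).out.1).eval (c e)
      map_add' _ _ := by ext; simp
      map_smul' _ _ := by ext; simp }
  have hev : Function.Injective ev := by
    rw [← LinearMap.ker_eq_bot, LinearMap.ker_eq_bot']
    refine fun p hp => Subtype.ext <| eq_zero_of_percolates hc p.2 hS fun e he => ?_
    exact ⟨e.out.1, Sym2.out_fst_mem e, congrFun hp ⟨e, he⟩⟩
  exact (LinearMap.finrank_le_finrank_of_injective hev).trans_eq (by simp)

theorem wdim_le_me (hc : IsProperEdgeColoring G c) : Wdim G r c ≤ me G r := by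
  obtain ⟨S, hS, hcard⟩ := exists_percolates_card_eq_me G r
  exact hcard ▸ wdim_le_card_of_percolates hc hS

end PolynomialBound

theorem mul_mem_degreeLT {R : Type*} [Semiring R] {p q : R[X]} {m n k : ℕ}
    (hp : p.degree ≤ n) (hq : q ∈ degreeLT R m) (h : q ≠ 0 → n + m ≤ k) :
    p * q ∈ degreeLT R k := by
  rcases eq_or_ne q 0 with rfl | hq0
  · simp
  rw [mem_degreeLT] at hq ⊢
  calc (p * q).degree ≤ p.degree + q.degree := degree_mul_le _ _
    _ ≤ n + q.degree := by gcongr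
    _ < n + m := WithBot.add_lt_add_left (by simp) hq
    _ ≤ k := by exact_mod_cast h hq0

theorem pos_of_mem_degreeLT {R : Type*} [Semiring R] {q : R[X]} {m : ℕ}
    (hq : q ∈ degreeLT R m) (hq0 : q ≠ 0) : 0 < m := by
  have := (zero_le_degree_iff.mpr hq0).trans_lt (mem_degreeLT.mp hq)
  exact_mod_cast this

instance (n : ℕ) : Module.Finite ℝ (degreeLT ℝ n) :=
  Module.Finite.equiv (degreeLTEquiv ℝ n).symm

theorem finrank_degreeLT (n : ℕ) : Module.finrank ℝ (degreeLT ℝ n) = n := by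
  simp [LinearEquiv.finrank_eq (degreeLTEquiv ℝ n)]

instance {V : Type*} [Fintype V] (G : SimpleGraph V) (r : ℕ) (c : Sym2 V → ℝ) :
    FiniteDimensional ℝ (Wspace G r c) :=
  let restrict : Wspace G r c →ₗ[ℝ] Π v, degreeLT ℝ (min r (G.degree v)) :=
    LinearMap.pi fun v => ((LinearMap.proj v).comp (Wspace G r c).subtype).codRestrict _
      fun p => mem_degreeLT.mpr (p.2.1 v)
  .of_injective restrict fun _ _ h =>
    Subtype.ext <| funext fun v => congrArg Subtype.val (congrFun h v)

section StarGraph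

variable {a : ℕ}

theorem starGraph_adj {i j : Fin (a + 1)} :
    (starGraph a).Adj i j ↔ i ≠ j ∧ (i = 0 ∨ j = 0) :=
  Iff.rfl

theorem starGraph_degree_zero : (starGraph a).degree 0 = a := by
  have : (starGraph a).neighborFinset 0 = Finset.univ.erase 0 := by
    ext j
    simp [starGraph_adj, eq_comm]
  simp [SimpleGraph.degree, this]

theorem starGraph_degree_succ (j : Fin a) : (starGraph a).degree j.succ = 1 := by
  have : (starGraph a).neighborFinset j.succ = {0} := by
    ext i
    rcases eq_or_ne i 0 with rfl | hi <;> simp [starGraph_adj, *, Fin.succ_ne_zero]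
  simp [SimpleGraph.degree, this]

end StarGraph

section ProdColoring

variable {U : Type*}

/-- Layer edges keep their colour in `G`; the star edge between `(u, 0)` and `(u, j)` gets
colour `γ j`. -/
noncomputable def prodColoring (a : ℕ) (c : Sym2 U → ℝ) (γ : Fin (a + 1) → ℝ) :
    Sym2 (U × Fin (a + 1)) → ℝ :=
  Sym2.lift ⟨fun x y => if x.1 = y.1 then γ (max x.2 y.2) else c s(x.1, y.1), fun x y => by
    by_cases h : x.1 = y.1
    · simp [h, max_comm]
    · simp [h, Ne.symm h, Sym2.eq_swap]⟩

variable {G : SimpleGraph U} {a : ℕ} {c : Sym2 U → ℝ} {γ : Fin (a + 1) → ℝ}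

theorem prodColoring_layer {u w : U} (h : u ≠ w) (i i' : Fin (a + 1)) :
    prodColoring a c γ s((u, i), (w, i')) = c s(u, w) := by
  simp [prodColoring, h]

theorem prodColoring_star (u : U) (i i' : Fin (a + 1)) :
    prodColoring a c γ s((u, i), (u, i')) = γ (max i i') := by
  simp [prodColoring]

theorem boxProd_starGraph_edge_cases {e : Sym2 (U × Fin (a + 1))} {u : U} {i : Fin (a + 1)}
    (he : e ∈ (G □ starGraph a).edgeSet) (hx : (u, i) ∈ e) :
    (∃ w, G.Adj u w ∧ e = s((u, i), (w, i))) ∨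
      ∃ i', (starGraph a).Adj i i' ∧ e = s((u, i), (u, i')) := by
  obtain ⟨⟨w, i'⟩, rfl⟩ := Sym2.mem_iff_exists.mp hx
  rcases SimpleGraph.boxProd_adj.mp he with ⟨hadj, hi : i = i'⟩ | ⟨hadj, hu : u = w⟩
  · exact .inl ⟨w, hadj, hi ▸ rfl⟩
  · exact .inr ⟨i', hadj, hu ▸ rfl⟩

theorem IsProperEdgeColoring.prodColoring (hc : IsProperEdgeColoring G c)
    (hγ : Function.Injective γ) (hγc : ∀ j, γ j ∉ c '' G.edgeSet) :
    IsProperEdgeColoring (G □ starGraph a) (prodColoring a c γ) := by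
  rintro e he f hf hef ⟨⟨u, i⟩, hue, huf⟩
  rcases boxProd_starGraph_edge_cases he hue with ⟨w, hw, rfl⟩ | ⟨i', hi', rfl⟩ <;>
    rcases boxProd_starGraph_edge_cases hf huf with ⟨w', hw', rfl⟩ | ⟨i'', hi'', rfl⟩
  · rw [prodColoring_layer hw.ne, prodColoring_layer hw'.ne]
    refine hc _ hw _ hw' (fun h => hef ?_) ⟨u, Sym2.mem_mk_left _ _, Sym2.mem_mk_left _ _⟩
    rw [(Sym2.congr_right.mp h)]
  · rw [prodColoring_layer hw.ne, prodColoring_star]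
    exact fun h => hγc _ ⟨_, hw, h⟩
  · rw [prodColoring_layer hw'.ne, prodColoring_star]
    exact fun h => hγc _ ⟨_, hw', h.symm⟩
  · rw [prodColoring_star, prodColoring_star]
    refine fun h => hef ?_
    have hmax := hγ h
    rcases starGraph_adj.mp hi' with ⟨-, rfl | rfl⟩ <;>
      rcases starGraph_adj.mp hi'' with ⟨-, h'' | rfl⟩
    · simp_all
    · simp_all
    · exact absurd h'' hi'.ne
    · rfl

end ProdColoring

section UpperBound

variable {U : Type*}

abbrev starEdge {a : ℕ} (u : U) (j : Fin a) : Sym2 (U × Fin (a + 1)) := s((u, 0), (u, j.succ))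

noncomputable def starSeed [Fintype U] (G : SimpleGraph U) (a r : ℕ)
    (S₁ S₂ : Finset (Sym2 U)) : Finset (Sym2 (U × Fin (a + 1))) :=
  S₁.image (Sym2.map (G.boxProdLeft (starGraph a) 0)) ∪
    Finset.univ.biUnion (fun j : Fin a =>
      S₂.image (Sym2.map (G.boxProdLeft (starGraph a) j.succ))) ∪
    Finset.univ.biUnion fun u =>
      (Finset.univ.filter fun j : Fin a => (j : ℕ) < min (r - G.degree u) a).image (starEdge u)

variable {G : SimpleGraph U} {a r : ℕ}

theorem starEdge_mem_edgeSet (u : U) (j : Fin a) :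
    starEdge u j ∈ (G □ starGraph a).edgeSet :=
  SimpleGraph.boxProd_adj.mpr <|
    .inr ⟨starGraph_adj.mpr ⟨(Fin.succ_ne_zero j).symm, .inl rfl⟩, rfl⟩

theorem starEdge_notMem_range_map (u : U) (j : Fin a) (i : Fin (a + 1)) :
    starEdge u j ∉ Set.range (Sym2.map (G.boxProdLeft (starGraph a) i)) := by
  rintro ⟨e, he⟩
  induction e using Sym2.ind with
  | _ x y =>
    simp only [Sym2.map_mk, SimpleGraph.boxProdLeft_apply, Sym2.eq_iff, Prod.mk.injEq] at he
    rcases he with ⟨⟨-, rfl⟩, -, h⟩ | ⟨⟨-, rfl⟩, -, h⟩ <;>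
      exact Fin.succ_ne_zero j (by simp_all)

variable [Fintype U]

theorem card_starSeed_le (S₁ S₂ : Finset (Sym2 U)) :
    (starSeed G a r S₁ S₂).card ≤
      S₁.card + a * S₂.card + ∑ u, min (r - G.degree u) a := by
  refine (Finset.card_union_le _ _).trans (add_le_add ((Finset.card_union_le _ _).trans
    (add_le_add Finset.card_image_le ?_)) ?_)
  · calc _ ≤ ∑ j : Fin a, (S₂.image (Sym2.map (G.boxProdLeft (starGraph a) j.succ))).card :=
          Finset.card_biUnion_le
      _ ≤ ∑ _j : Fin a, S₂.card := Finset.sum_le_sum fun _ _ => Finset.card_image_le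
      _ = a * S₂.card := by simp
  · refine Finset.card_biUnion_le.trans (Finset.sum_le_sum fun u _ => ?_)
    exact Finset.card_image_le.trans (by simp [Fin.card_filter_val_lt])

variable {S₁ S₂ : Finset (Sym2 U)}

theorem map_mem_starSeed_zero {e : Sym2 U} (he : e ∈ S₁) :
    e.map (G.boxProdLeft (starGraph a) 0) ∈ starSeed G a r S₁ S₂ :=
  Finset.mem_union_left _ (Finset.mem_union_left _ (Finset.mem_image_of_mem _ he))

theorem map_mem_starSeed_succ (j : Fin a) {e : Sym2 U} (he : e ∈ S₂) :
    e.map (G.boxProdLeft (starGraph a) j.succ) ∈ starSeed G a r S₁ S₂ :=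
  Finset.mem_union_left _ <| Finset.mem_union_right _ <|
    Finset.mem_biUnion.mpr ⟨j, Finset.mem_univ _, Finset.mem_image_of_mem _ he⟩

theorem starEdge_mem_starSeed {u : U} {j : Fin a} (hj : (j : ℕ) < min (r - G.degree u) a) :
    starEdge u j ∈ starSeed G a r S₁ S₂ :=
  Finset.mem_union_right _ <| Finset.mem_biUnion.mpr
    ⟨u, Finset.mem_univ _, Finset.mem_image_of_mem _ (by simpa using hj)⟩

theorem infected_starSeed_layer_zero (h₁ : Percolates G r S₁) {e : Sym2 U}
    (he : e ∈ G.edgeSet) :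
    Infected (G □ starGraph a) r (starSeed G a r S₁ S₂)
      (e.map (G.boxProdLeft (starGraph a) 0)) :=
  (h₁.2 e he).map _ (fun _ => ∅) (by simp) (by simp) (by simp)
    fun _ hf => .init (map_mem_starSeed_zero hf)

/-- A star edge outside the seed is infected from its centre, which already sees `deg u`
infected edges in layer `0` and `min (r - deg u) a` seeded star edges. -/
theorem infected_starSeed_starEdge (h₁ : Percolates G r S₁) (u : U) (j : Fin a) :
    Infected (G □ starGraph a) r (starSeed G a r S₁ S₂) (starEdge u j) := by
  set k := min (r - G.degree u) a
  by_cases hj : (j : ℕ) < k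
  · exact .init (starEdge_mem_starSeed hj)
  let L := (G.incidenceFinset u).image (Sym2.map (G.boxProdLeft (starGraph a) 0))
  let T := (Finset.univ.filter fun j : Fin a => (j : ℕ) < k).image (starEdge u)
  have hLT : ∀ f ∈ L ∪ T,
      f ∈ (G □ starGraph a).edgeSet ∧ (u, (0 : Fin (a + 1))) ∈ f ∧
        Infected (G □ starGraph a) r (starSeed G a r S₁ S₂) f := by
    simp only [L, T, Finset.mem_union, Finset.mem_image, Finset.mem_filter,
      SimpleGraph.mem_incidenceFinset]
    rintro _ (⟨f, ⟨hf, hu⟩, rfl⟩ | ⟨j', ⟨-, hj'⟩, rfl⟩)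
    · exact ⟨(G.boxProdLeft _ 0).toHom.map_mem_edgeSet hf, Sym2.mem_map.mpr ⟨u, hu, rfl⟩,
        infected_starSeed_layer_zero h₁ hf⟩
    · exact ⟨starEdge_mem_edgeSet u j', Sym2.mem_mk_left _ _,
        .init (starEdge_mem_starSeed hj')⟩
  have hcard : (L ∪ T).card = G.degree u + k := by
    rw [Finset.card_union_of_disjoint,
      Finset.card_image_of_injective _ (Sym2.map.injective (G.boxProdLeft _ 0).injective),
      SimpleGraph.card_incidenceFinset_eq_degree,
      Finset.card_image_of_injective _ fun _ _ h => Fin.succ_injective _ (by simpa using h),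
      Fin.card_filter_val_lt, min_eq_right (min_le_right _ _)]
    exact Finset.disjoint_left.mpr fun f hfL hfT => by
      obtain ⟨j', -, rfl⟩ := Finset.mem_image.mp hfT
      obtain ⟨g, -, hg⟩ := Finset.mem_image.mp hfL
      exact starEdge_notMem_range_map u j' 0 ⟨g, hg⟩
  exact .step (starEdge_mem_edgeSet u j) (u, 0) (Sym2.mem_mk_left _ _) (L ∪ T) (by omega)
    (fun f hf => (hLT f hf).1) (fun f hf => (hLT f hf).2.1) (fun f hf => (hLT f hf).2.2)

/-- In layer `j + 1` every vertex gets one extra infected edge, its star edge, so percolation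
with threshold `r - 1` in `G` lifts to threshold `r`. -/
theorem infected_starSeed_layer_succ (h₁ : Percolates G r S₁) (h₂ : Percolates G (r - 1) S₂)
    (j : Fin a) {e : Sym2 U} (he : e ∈ G.edgeSet) :
    Infected (G □ starGraph a) r (starSeed G a r S₁ S₂)
      (e.map (G.boxProdLeft (starGraph a) j.succ)) := by
  refine (h₂.2 e he).map _ (fun u => {starEdge u j}) ?_ ?_ (by simp; omega)
    fun _ hf => .init (map_mem_starSeed_succ j hf)
  all_goals simp only [Finset.mem_singleton, forall_eq]
  · exact fun u => ⟨starEdge_mem_edgeSet u j, Sym2.mem_mk_right _ _,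
      infected_starSeed_starEdge h₁ u j⟩
  · exact fun u => starEdge_notMem_range_map u j j.succ

theorem percolates_starSeed (h₁ : Percolates G r S₁) (h₂ : Percolates G (r - 1) S₂) :
    Percolates (G □ starGraph a) r (starSeed G a r S₁ S₂) := by
  refine ⟨fun e he => ?_, fun e he => ?_⟩
  · simp only [starSeed, Finset.coe_union, Finset.coe_image, Finset.coe_biUnion, Set.mem_union,
      Set.mem_image, Set.mem_iUnion, Finset.coe_filter] at he
    rcases he with (⟨f, hf, rfl⟩ | ⟨j, -, f, hf, rfl⟩) | ⟨u, -, j, -, rfl⟩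
    · exact (G.boxProdLeft _ 0).toHom.map_mem_edgeSet (h₁.1 hf)
    · exact (G.boxProdLeft _ j.succ).toHom.map_mem_edgeSet (h₂.1 hf)
    · exact starEdge_mem_edgeSet u j
  induction e using Sym2.ind with
  | _ x y =>
    obtain ⟨u, i⟩ := x
    obtain ⟨w, i'⟩ := y
    rcases SimpleGraph.boxProd_adj.mp he with ⟨hadj, hi : i = i'⟩ | ⟨hadj, rfl : u = w⟩
    · subst hi
      change Infected _ r _ (s(u, w).map (G.boxProdLeft (starGraph a) i))
      cases i using Fin.cases with
      | zero => exact infected_starSeed_layer_zero h₁ hadj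
      | succ j => exact infected_starSeed_layer_succ h₁ h₂ j hadj
    · rcases starGraph_adj.mp hadj with ⟨hne, rfl | rfl⟩
      · obtain ⟨j, rfl⟩ := Fin.exists_succ_eq.mpr hne.symm
        exact infected_starSeed_starEdge h₁ u j
      · obtain ⟨j, rfl⟩ := Fin.exists_succ_eq.mpr hne
        exact Sym2.eq_swap ▸ infected_starSeed_starEdge h₁ u j

theorem me_boxProd_starGraph_le :
    me (G □ starGraph a) r ≤ me G r + a * me G (r - 1) + ∑ u, min (r - G.degree u) a := by
  obtain ⟨S₁, h₁, hS₁⟩ := exists_percolates_card_eq_me G r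
  obtain ⟨S₂, h₂, hS₂⟩ := exists_percolates_card_eq_me G (r - 1)
  rw [← hS₁, ← hS₂]
  exact (me_le_card (percolates_starSeed h₁ h₂)).trans (card_starSeed_le S₁ S₂)

end UpperBound

section LowerBound

variable {U : Type*} [Fintype U] {G : SimpleGraph U} {a r : ℕ} {c : Sym2 U → ℝ}
  {γ : Fin (a + 1) → ℝ}

theorem mem_wspace_boxProd_starGraph {P : U × Fin (a + 1) → ℝ[X]}
    (hdeg_zero : ∀ u, P (u, 0) ∈ degreeLT ℝ (min r (G.degree u + a)))
    (hdeg_succ : ∀ u (j : Fin a), P (u, j.succ) ∈ degreeLT ℝ (min r (G.degree u + 1)))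
    (hlayer : ∀ u w i, G.Adj u w → (P (u, i)).eval (c s(u, w)) = (P (w, i)).eval (c s(u, w)))
    (hstar : ∀ u (j : Fin a), (P (u, 0)).eval (γ j.succ) = (P (u, j.succ)).eval (γ j.succ)) :
    P ∈ Wspace (G □ starGraph a) r (prodColoring a c γ) := by
  refine ⟨fun ⟨u, i⟩ => ?_, fun ⟨u, i⟩ ⟨w, i'⟩ hadj => ?_⟩
  · rw [SimpleGraph.degree_boxProd, ← mem_degreeLT]
    cases i using Fin.cases with
    | zero => simpa [starGraph_degree_zero] using hdeg_zero u
    | succ j => simpa [starGraph_degree_succ] using hdeg_succ u j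
  rcases SimpleGraph.boxProd_adj.mp hadj with ⟨hadj, hi : i = i'⟩ | ⟨hadj, rfl : u = w⟩
  · subst hi
    rw [prodColoring_layer hadj.ne]
    exact hlayer u w i hadj
  · rw [prodColoring_star]
    rcases starGraph_adj.mp hadj with ⟨hne, rfl | rfl⟩
    · obtain ⟨j, rfl⟩ := Fin.exists_succ_eq.mpr hne.symm
      simpa using hstar u j
    · obtain ⟨j, rfl⟩ := Fin.exists_succ_eq.mpr hne
      simpa using (hstar u j).symm

theorem degree_nodal_incidenceFinset (u : U) :
    (nodal (G.incidenceFinset u) c).degree = G.degree u := by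
  simp [degree_nodal]

theorem eval_nodal_incidenceFinset {u w : U} (h : G.Adj u w) :
    (nodal (G.incidenceFinset u) c).eval (c s(u, w)) = 0 ∧
      (nodal (G.incidenceFinset w) c).eval (c s(u, w)) = 0 :=
  ⟨eval_nodal_at_node (by simpa [SimpleGraph.incidenceSet] using h),
    eval_nodal_at_node (by simpa [SimpleGraph.incidenceSet] using h)⟩

variable (G a r c γ)

abbrev StarExtensionDomain :=
  Wspace G r c × (Fin a → Wspace G (r - 1) c) × Π u, degreeLT ℝ (min (r - G.degree u) a)

/-- The nodal polynomial of `u` vanishes at the colours of all edges of `G` at `u`, and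
`X - C (γ j.succ)` at the colour of the star edge into layer `j + 1`: this is what makes the
image satisfy the edge conditions of `W`. -/
noncomputable def starExtension :
    StarExtensionDomain G a r c →ₗ[ℝ] (U × Fin (a + 1) → ℝ[X]) where
  toFun x v := Fin.cases
    ((x.1 : U → ℝ[X]) v.1 + nodal (G.incidenceFinset v.1) c * x.2.2 v.1)
    (fun j => (x.1 : U → ℝ[X]) v.1 + (X - C (γ j.succ)) * (x.2.1 j : U → ℝ[X]) v.1 +
      C ((x.2.2 v.1 : ℝ[X]).eval (γ j.succ)) * nodal (G.incidenceFinset v.1) c) v.2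
  map_add' x y := by
    funext ⟨u, i⟩
    cases i using Fin.cases <;> simp <;> ring
  map_smul' t x := by
    funext ⟨u, i⟩
    cases i using Fin.cases <;> simp [smul_eq_C_mul] <;> ring

variable {G a r c γ}

theorem starExtension_mem (x : StarExtensionDomain G a r c) :
    starExtension G a r c γ x ∈ Wspace (G □ starGraph a) r (prodColoring a c γ) := by
  obtain ⟨p, q, g⟩ := x
  have hp : ∀ u δ, (p : U → ℝ[X]) u ∈ degreeLT ℝ (min r (G.degree u + δ)) := fun u δ =>
    degreeLT_mono (by omega) (mem_degreeLT.mpr (p.2.1 u))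
  have hg : ∀ u, (g u : ℝ[X]) ≠ 0 → G.degree u < r := fun u h => by
    have := pos_of_mem_degreeLT (g u).2 h
    omega
  apply mem_wspace_boxProd_starGraph
  · intro u
    exact add_mem (hp u a) (mul_mem_degreeLT (degree_nodal_incidenceFinset u).le (g u).2
      fun h => by have := hg u h; omega)
  · intro u j
    refine add_mem (add_mem (hp u 1) (mul_mem_degreeLT (n := 1) (degree_X_sub_C _).le
      (mem_degreeLT.mpr ((q j).2.1 u)) fun h => ?_)) ?_
    · have := pos_of_mem_degreeLT (mem_degreeLT.mpr ((q j).2.1 u)) h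
      omega
    · rw [mul_comm]
      refine mul_mem_degreeLT (m := 1) (degree_nodal_incidenceFinset u).le
        (mem_degreeLT.mpr (degree_C_le.trans_lt (by simp))) fun h => ?_
      have := hg u fun h' => h (by simp [h'])
      omega
  · intro u w i hadj
    have hZ := eval_nodal_incidenceFinset (c := c) hadj
    cases i using Fin.cases with
    | zero => simp [starExtension, hZ, p.2.2 u w hadj]
    | succ j => simp [starExtension, hZ, p.2.2 u w hadj, (q j).2.2 u w hadj]
  · intro u j
    simp [starExtension]
    ring

theorem starExtension_injective : Function.Injective (starExtension G a r c γ) := by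
  rw [← LinearMap.ker_eq_bot, LinearMap.ker_eq_bot']
  rintro ⟨p, q, g⟩ h
  -- at `(u, 0)`, `p u` is the remainder and `g u` the quotient of `0` by the nodal polynomial
  have hpg : ∀ u, (p : U → ℝ[X]) u = 0 ∧ (g u : ℝ[X]) = 0 := fun u => by
    have hdeg : ((p : U → ℝ[X]) u).degree < (nodal (G.incidenceFinset u) c).degree := by
      rw [degree_nodal_incidenceFinset]
      exact (p.2.1 u).trans_le (by exact_mod_cast min_le_right _ _)
    obtain ⟨hg, hp⟩ := div_modByMonic_unique (g u : ℝ[X]) _ nodal_monic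
      ⟨by simpa [starExtension] using congrFun h (u, 0), hdeg⟩
    simp only [zero_divByMonic, zero_modByMonic] at hg hp
    exact ⟨hp.symm, hg.symm⟩
  have hq : ∀ j u, (q j : U → ℝ[X]) u = 0 := fun j u => by
    have := congrFun h (u, j.succ)
    simpa [starExtension, (hpg u).1, (hpg u).2, X_sub_C_ne_zero] using this
  refine Prod.ext (Subtype.ext (funext fun u => (hpg u).1)) (Prod.ext ?_ ?_)
  · exact funext fun j => Subtype.ext (funext (hq j))
  · exact funext fun u => Subtype.ext (hpg u).2

theorem wdim_add_le_wdim_boxProd_starGraph :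
    Wdim G r c + a * Wdim G (r - 1) c + ∑ u, min (r - G.degree u) a ≤
      Wdim (G □ starGraph a) r (prodColoring a c γ) := by
  have hdom : Module.finrank ℝ (StarExtensionDomain G a r c) =
      Wdim G r c + a * Wdim G (r - 1) c + ∑ u, min (r - G.degree u) a := by
    simp [StarExtensionDomain, Wdim, Module.finrank_pi_fintype, finrank_degreeLT, add_assoc]
  rw [← hdom]
  exact LinearMap.finrank_le_finrank_of_injective
    (f := (starExtension G a r c γ).codRestrict _ starExtension_mem)
    fun _ _ h => starExtension_injective (congrArg Subtype.val h)

end LowerBound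

theorem exists_injective_forall_notMem {α : Type*} [Infinite α] {F : Set α} (hF : F.Finite)
    (n : ℕ) : ∃ γ : Fin n → α, Function.Injective γ ∧ ∀ j, γ j ∉ F :=
  let e := hF.infinite_compl.natEmbedding
  ⟨fun j => e j, fun _ _ h => Fin.ext (e.injective (Subtype.ext h)), fun j => (e j).2⟩

def IsSharpColoring {V : Type*} [Fintype V] (G : SimpleGraph V) (c : Sym2 V → ℝ) : Prop :=
  IsProperEdgeColoring G c ∧ ∀ r, me G r = Wdim G r c

section Sharp

variable {U : Type*} [Fintype U] {G : SimpleGraph U} {c : Sym2 U → ℝ} {a : ℕ}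
  {γ : Fin (a + 1) → ℝ}

theorem IsSharpColoring.me_boxProd_starGraph (hc : IsSharpColoring G c)
    (hγ : Function.Injective γ) (hγc : ∀ j, γ j ∉ c '' G.edgeSet) (r : ℕ) :
    me (G □ starGraph a) r = me G r + a * me G (r - 1) + ∑ u, min (r - G.degree u) a := by
  refine le_antisymm me_boxProd_starGraph_le ?_
  rw [hc.2, hc.2]
  exact wdim_add_le_wdim_boxProd_starGraph.trans (wdim_le_me (hc.1.prodColoring hγ hγc))

theorem IsSharpColoring.boxProd_starGraph (hc : IsSharpColoring G c)
    (hγ : Function.Injective γ) (hγc : ∀ j, γ j ∉ c '' G.edgeSet) :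
    IsSharpColoring (G □ starGraph a) (prodColoring a c γ) := by
  have hproper := hc.1.prodColoring hγ hγc
  refine ⟨hproper, fun r => le_antisymm ?_ (wdim_le_me hproper)⟩
  rw [hc.me_boxProd_starGraph hγ hγc, hc.2, hc.2]
  exact wdim_add_le_wdim_boxProd_starGraph

end Sharp

theorem exists_isSharpColoring_starProd : ∀ l : List ℕ, ∃ c, IsSharpColoring (starProd l).2 c
  | [] => by
    have hc : IsProperEdgeColoring (starProd []).2 0 := fun e he => by
      simp [starProd] at he
      exact he.elim
    refine ⟨0, hc, fun r => ?_⟩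
    have := wdim_le_me (r := r) hc
    rw [show (starProd []).2 = ⊥ from rfl, me_bot] at this ⊢
    omega
  | a :: l => by
    obtain ⟨c, hc⟩ := exists_isSharpColoring_starProd l
    obtain ⟨γ, hγ, hγc⟩ := exists_injective_forall_notMem
      ((starProd l).2.edgeSet.toFinite.image c) (a + 1)
    exact ⟨_, hc.boxProd_starGraph hγ hγc⟩

theorem min_sub_eq_sum_ite (d r a : ℕ) :
    min (r - d) a = ∑ t ∈ Finset.Icc 1 (a - 1), (if (d : ℤ) = r - t then t else 0) +
      ∑ t ∈ Finset.Icc a r, if (d : ℤ) = r - t then a else 0 := by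
  rcases le_or_gt d r with hd | hd
  · have hiff : ∀ t : ℕ, (d : ℤ) = r - t ↔ r - d = t := fun t => by omega
    simp only [hiff, Finset.sum_ite_eq, Finset.mem_Icc]
    split_ifs <;> omega
  · rw [Nat.sub_eq_zero_of_le hd.le, Nat.zero_min, eq_comm, Nat.add_eq_zero_iff]
    exact ⟨Finset.sum_eq_zero fun t _ => if_neg (by omega),
      Finset.sum_eq_zero fun t _ => if_neg (by omega)⟩

theorem sum_min_sub_degree_eq {U : Type*} [Fintype U] (G : SimpleGraph U) (r a : ℕ) :
    ∑ u, min (r - G.degree u) a =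
      (∑ t ∈ Finset.Icc 1 (a - 1), t * dcount G ((r : ℤ) - t)) +
        a * ∑ t ∈ Finset.Icc a r, dcount G ((r : ℤ) - t) := by
  have hd : ∀ i, dcount G i = ∑ u, if (G.degree u : ℤ) = i then 1 else 0 := fun i => by
    rw [dcount, Nat.card_eq_fintype_card, Fintype.card_subtype, Finset.card_filter]
  simp only [hd, Finset.mul_sum, mul_ite, mul_one, mul_zero]
  rw [Finset.sum_comm, Finset.sum_comm (s := Finset.Icc a r), ← Finset.sum_add_distrib]
  exact Finset.sum_congr rfl fun u _ => min_sub_eq_sum_ite _ _ _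

theorem star_products_general (r a : ℕ) (l : List ℕ) :
    me (starProd (a :: l)).2 r =
      me (starProd l).2 r + a * me (starProd l).2 (r - 1) +
      (∑ t ∈ Finset.Icc 1 (a - 1), t * dcount (starProd l).2 ((r : ℤ) - t)) +
      a * ∑ t ∈ Finset.Icc a r, dcount (starProd l).2 ((r : ℤ) - t) := by
  obtain ⟨c, hc⟩ := exists_isSharpColoring_starProd l
  obtain ⟨γ, hγ, hγc⟩ :=
    exists_injective_forall_notMem ((starProd l).2.edgeSet.toFinite.image c) (a + 1)
  rw [add_assoc _ (∑ t ∈ _, _), ← sum_min_sub_degree_eq]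
  exact hc.me_boxProd_starGraph hγ hγc r

/-- Recursive formula for products of stars: with `G_{k-1}` the product of the stars in
`l` and `G_k = G_{k-1} □ S_a`, the stated recursion holds. -/
theorem star_products (r a : ℕ) (hr : 1 ≤ r) (ha : 1 ≤ a) (l : List ℕ)
    (hl : ∀ b ∈ l, 1 ≤ b) :
    me (starProd (a :: l)).2 r =
      me (starProd l).2 r + a * me (starProd l).2 (r - 1) +
      (∑ t ∈ Finset.Icc 1 (a - 1), t * dcount (starProd l).2 ((r : ℤ) - t)) +
      a * ∑ t ∈ Finset.Icc a r, dcount (starProd l).2 ((r : ℤ) - t) :=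
  star_products_general r a l

end BondPerc
end

section
/- Percolation from full copies in products: let G be a graph with δ(G) ≥ r, and H any connected graph. If in G□H all edges of the copy G_u of G (for some vertex u of H) are infected, and for each other vertex w of H an (r−1)-percolating set of the copy G_w is infected, then running r-bond bootstrap percolation infects all edges of G□H. -/
/-!
Once a copy `G_w` is fully infected, every vertex `(v, w)` has at least `δ(G) ≥ r` infected
edges, so all vertical edges from `G_w` to a neighbouring copy `G_w'` become infected. Each
vertex of `G_w'` then carries one infected edge outside `G_w'`, which together with any `r - 1`
infected edges inside `G_w'` meets the threshold `r`; hence the infected `(r - 1)`-percolating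
set of `G_w'` percolates inside `G_w'`. Connectivity of `H` spreads full infection from `G_u` to
every copy, and then to every vertical edge.
-/

open Polynomial

namespace BondPerc

open Classical

set_option maxHeartbeats 1000000

section

variable {V W : Type*} {G : SimpleGraph V} {H : SimpleGraph W} {r : ℕ}
  {S : Set (Sym2 (V × W))}

lemma map_mem_edgeSet_boxProd (w : W) {e : Sym2 V} (he : e ∈ G.edgeSet) :
    Sym2.map (·, w) e ∈ (G □ H).edgeSet := by
  induction e using Sym2.ind with
  | _ a b => simpa [SimpleGraph.boxProd_adj_left] using he

lemma map_prodMk_injective (w : W) : Function.Injective (Sym2.map (fun v : V => (v, w))) :=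
  Sym2.map.injective fun _ _ h => congrArg Prod.fst h

variable (G H r S) in
def CopyInfected (w : W) : Prop :=
  ∀ e ∈ G.edgeSet, Infected (G □ H) r S (Sym2.map (·, w) e)

lemma infected_vertical [G.LocallyFinite] {v : V} (hv : r ≤ G.degree v) {w w' : W}
    (hww' : H.Adj w w') (hstar : ∀ x, G.Adj v x → Infected (G □ H) r S s((v, w), (x, w))) :
    Infected (G □ H) r S s((v, w), (v, w')) := by
  have hinj : Function.Injective fun x : V => s((v, w), (x, w)) := fun a b h =>
    congrArg Prod.fst (Sym2.congr_right.1 h)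
  refine .step (SimpleGraph.boxProd_adj_right.2 hww') (v, w) (Sym2.mem_mk_left _ _)
    ((G.neighborFinset v).image fun x => s((v, w), (x, w))) ?_ ?_ ?_ ?_
  · rwa [Finset.card_image_of_injective _ hinj, G.card_neighborFinset_eq_degree]
  all_goals
    simp only [Finset.mem_image, G.mem_neighborFinset]
    rintro _ ⟨x, hx, rfl⟩
  · exact SimpleGraph.boxProd_adj_left.2 hx
  · exact Sym2.mem_mk_left _ _
  · exact hstar x hx

lemma CopyInfected.infected_vertical [G.LocallyFinite] (hdeg : ∀ v, r ≤ G.degree v) {w w' : W}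
    (hw : CopyInfected G H r S w) (hww' : H.Adj w w') (v : V) :
    Infected (G □ H) r S s((v, w), (v, w')) :=
  BondPerc.infected_vertical (hdeg v) hww' fun x hx => by
    simpa using hw s(v, x) hx

lemma infected_map_of_infected {F : Set (Sym2 V)} {w w' : W} (hww' : H.Adj w w')
    (hF : ∀ f ∈ F, Infected (G □ H) r S (Sym2.map (·, w) f))
    (hvert : ∀ v, Infected (G □ H) r S s((v, w), (v, w'))) {e : Sym2 V}
    (he : Infected G (r - 1) F e) : Infected (G □ H) r S (Sym2.map (·, w) e) := by
  induction he with
  | init hf => exact hF _ hf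
  | step hf v hv T hT hTG hTv _ ih =>
    have hout : s((v, w), (v, w')) ∉ T.image (Sym2.map (·, w)) := by
      simp only [Finset.mem_image, not_exists, not_and]
      intro g _ hg
      obtain ⟨_, _, h⟩ := Sym2.mem_map.1 (hg ▸ Sym2.mem_mk_right _ _ : (v, w') ∈ Sym2.map _ g)
      exact hww'.ne (congrArg Prod.snd h)
    refine .step (map_mem_edgeSet_boxProd w hf) (v, w) (Sym2.mem_map.2 ⟨v, hv, rfl⟩)
      (insert s((v, w), (v, w')) (T.image (Sym2.map (·, w)))) ?_ ?_ ?_ ?_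
    · rw [Finset.card_insert_of_notMem hout,
        Finset.card_image_of_injective _ (map_prodMk_injective w)]
      omega
    all_goals
      simp only [Finset.mem_insert, Finset.mem_image]
      rintro _ (rfl | ⟨g, hg, rfl⟩)
    · exact SimpleGraph.boxProd_adj_right.2 hww'
    · exact map_mem_edgeSet_boxProd w (hTG g hg)
    · exact Sym2.mem_mk_left _ _
    · exact Sym2.mem_map.2 ⟨v, hTv g hg, rfl⟩
    · exact hvert v
    · exact ih g hg

lemma CopyInfected.of_adj [G.LocallyFinite] (hdeg : ∀ v, r ≤ G.degree v) {w w' : W}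
    (hw : CopyInfected G H r S w) (hww' : H.Adj w w') {F : Set (Sym2 V)}
    (hF : ∀ f ∈ F, Infected (G □ H) r S (Sym2.map (·, w') f))
    (hperc : ∀ e ∈ G.edgeSet, Infected G (r - 1) F e) : CopyInfected G H r S w' :=
  fun e he => infected_map_of_infected hww'.symm hF
    (fun v => Sym2.eq_swap ▸ hw.infected_vertical hdeg hww' v) (hperc e he)

lemma infected_of_forall_copyInfected [G.LocallyFinite] (hdeg : ∀ v, r ≤ G.degree v)
    (hcopy : ∀ w, CopyInfected G H r S w) {e : Sym2 (V × W)} (he : e ∈ (G □ H).edgeSet) :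
    Infected (G □ H) r S e := by
  induction e using Sym2.ind with
  | _ x y =>
    obtain ⟨a, w⟩ := x
    obtain ⟨b, w'⟩ := y
    rcases SimpleGraph.boxProd_adj.1 he with ⟨hab, rfl : w = w'⟩ | ⟨hww', rfl : a = b⟩
    · simpa using hcopy w s(a, b) hab
    · exact (hcopy w).infected_vertical hdeg hww' a

end

theorem percolation_from_full_copy_general {V W : Type*} [Fintype V]
    (G : SimpleGraph V) (H : SimpleGraph W) (hH : H.Connected) (r : ℕ)
    (hdel : r ≤ G.minDegree) (u : W) (F : W → Set (Sym2 V))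
    (hFu : F u = G.edgeSet) (hFw : ∀ w, w ≠ u → Percolates G (r - 1) (F w)) :
    Percolates (G □ H) r (⋃ w, Sym2.map (fun v => (v, w)) '' F w) := by
  set S := ⋃ w, Sym2.map (fun v => (v, w)) '' F w
  have hFS (w : W) : ∀ f ∈ F w, Infected (G □ H) r S (Sym2.map (·, w) f) :=
    fun f hf => .init (Set.mem_iUnion.2 ⟨w, f, hf, rfl⟩)
  have hFG (w : W) : F w ⊆ G.edgeSet := by
    by_cases hw : w = u
    · exact hw ▸ hFu.le
    · exact (hFw w hw).1
  have hdeg (v : V) : r ≤ G.degree v := hdel.trans (G.minDegree_le_degree v)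
  have hbase : CopyInfected G H r S u := fun e he => hFS u e (hFu ▸ he)
  have hcopy (w : W) : CopyInfected G H r S w := by
    induction (SimpleGraph.reachable_iff_reflTransGen u w).1 (hH.preconnected u w) with
    | refl => exact hbase
    | @tail w₁ w₂ _ hadj ih =>
      by_cases hw₂ : w₂ = u
      · exact hw₂ ▸ hbase
      · exact ih.of_adj hdeg hadj (hFS w₂) (hFw w₂ hw₂).2
  refine ⟨?_, fun e he => infected_of_forall_copyInfected hdeg hcopy he⟩
  simp only [S, Set.iUnion_subset_iff, Set.image_subset_iff]
  exact fun w f hf => map_mem_edgeSet_boxProd w (hFG w hf)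

/-- Percolation from full copies in products: if `δ(G) ≥ r`, `H` is connected, the copy
`G_u` is fully infected and each other copy `G_w` carries an infected
`(r-1)`-percolating set, then `r`-bond bootstrap percolation infects all of `G □ H`. -/
theorem percolation_from_full_copy {V W : Type*} [Fintype V] [Fintype W]
    (G : SimpleGraph V) (H : SimpleGraph W) (hH : H.Connected) (r : ℕ) (hr : 1 ≤ r)
    (hdel : r ≤ G.minDegree) (u : W) (F : W → Set (Sym2 V))
    (hFu : F u = G.edgeSet) (hFw : ∀ w, w ≠ u → Percolates G (r - 1) (F w)) :
    Percolates (G □ H) r (⋃ w, Sym2.map (fun v => (v, w)) '' F w) :=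
  percolation_from_full_copy_general G H hH r hdel u F hFu hFw

end BondPerc
end
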